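/- Fix integers m, n, k ≥ 1 and consider the word w = [a^m, b^n]^k in the free group F_2. Then there exist A, B in SU(2) such that tr(w(A,B)) = 0, where w(A,B) denotes the evaluation of the word with a ↦ A, b ↦ B and [x,y] = x^{-1}y^{-1}xy. -/
import Mathlib


/-- The special unitary group `SU(2)` as a subgroup of the `2 × 2` unitary group. -/
def SU2 : Subgroup (Matrix.unitaryGroup (Fin 2) ℂ) where
  carrier := {A | (A : Matrix (Fin 2) (Fin 2) ℂ).det = 1}
  one_mem' := by simp
  mul_mem' := by
    intro A B hA hB
    simp only [Set.mem_setOf_eq] at *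
    rw [Matrix.UnitaryGroup.mul_val, Matrix.det_mul, hA, hB, one_mul]
  inv_mem' := by
    intro A hA
    simp only [Set.mem_setOf_eq] at *
    rw [Matrix.UnitaryGroup.inv_val]
    simp [Matrix.det_conjTranspose, star, hA]
    rfl

/-- The underlying `2 × 2` complex matrix of an element of `SU(2)`. -/
def SU2.mat (A : SU2) : Matrix (Fin 2) (Fin 2) ℂ := A.val.val

/-- Evaluation of a free-group word on two letters: `a` (= `true`) goes to `A`,
`b` (= `false`) goes to `B`. -/
def evalWord {G : Type*} [Group G] (A B : G) : FreeGroup Bool →* G :=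
  FreeGroup.lift (fun c => if c then A else B)

/-- The generators of the free group `F₂`. -/
def genA : FreeGroup Bool := FreeGroup.of true
def genB : FreeGroup Bool := FreeGroup.of false

noncomputable def Dm (t : ℝ) : Matrix (Fin 2) (Fin 2) ℂ :=
  !![Complex.exp (t * Complex.I), 0; 0, Complex.exp (-(t * Complex.I))]

noncomputable def Rm (t : ℝ) : Matrix (Fin 2) (Fin 2) ℂ :=
  !![(Real.cos t : ℂ), -(Real.sin t : ℂ); (Real.sin t : ℂ), (Real.cos t : ℂ)]

lemma Dm_mul (s t : ℝ) : Dm s * Dm t = Dm (s + t) := by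
  ext i j
  fin_cases i <;> fin_cases j <;>
    simp [Dm, Matrix.mul_fin_two, ← Complex.exp_add] <;>
    (congr 1; push_cast; ring)

lemma Dm_zero : Dm 0 = 1 := by
  simp [Dm, Matrix.one_fin_two]

lemma Dm_pow (t : ℝ) (m : ℕ) : Dm t ^ m = Dm (m * t) := by
  induction m with
  | zero => simp [Dm_zero]
  | succ m ih => rw [pow_succ, ih, Dm_mul]; push_cast; ring_nf

lemma Dm_star (t : ℝ) : star (Dm t) = Dm (-t) := by
  ext i j
  fin_cases i <;> fin_cases j <;>
    simp [Dm, Matrix.conjTranspose_apply, ← Complex.exp_conj, _root_.map_mul, Complex.conj_I] <;>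
    ring_nf

lemma Rm_mul (s t : ℝ) : Rm s * Rm t = Rm (s + t) := by
  simp only [Rm, Matrix.mul_fin_two, Real.cos_add, Real.sin_add]
  push_cast
  congr 1 <;> ring_nf

lemma Rm_zero : Rm 0 = 1 := by
  simp [Rm, Matrix.one_fin_two]

lemma Rm_pow (t : ℝ) (n : ℕ) : Rm t ^ n = Rm (n * t) := by
  induction n with
  | zero => simp [Rm_zero]
  | succ n ih => rw [pow_succ, ih, Rm_mul]; push_cast; ring_nf

lemma Rm_star (t : ℝ) : star (Rm t) = Rm (-t) := by
  ext i j
  fin_cases i <;> fin_cases j <;>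
    simp [Rm, Matrix.conjTranspose_apply, ← Complex.cos_conj, ← Complex.sin_conj,
      Complex.conj_ofReal]

lemma Dm_mem (t : ℝ) : Dm t ∈ Matrix.unitaryGroup (Fin 2) ℂ := by
  constructor <;> rw [Dm_star] <;> rw [Dm_mul] <;> simp [Dm_zero]

lemma Rm_mem (t : ℝ) : Rm t ∈ Matrix.unitaryGroup (Fin 2) ℂ := by
  constructor <;> rw [Rm_star] <;> rw [Rm_mul] <;> simp [Rm_zero]

lemma Dm_det (t : ℝ) : (Dm t).det = 1 := by
  simp [Dm, Matrix.det_fin_two_of, ← Complex.exp_add]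

lemma Rm_det (t : ℝ) : (Rm t).det = 1 := by
  simp [Rm, Matrix.det_fin_two_of]
  push_cast
  rw [← Complex.ofReal_one, ← Real.cos_sq_add_sin_sq t]
  push_cast; ring



lemma key_comm (a : ℝ) :
    star (Dm a) * star (Rm (Real.pi/2)) * (Dm a * Rm (Real.pi/2)) = Dm (-(2*a)) := by
  rw [Dm_star, Rm_star]
  ext i j
  fin_cases i <;> fin_cases j <;>
    simp [Dm, Rm, Matrix.mul_fin_two, Real.cos_pi_div_two, Real.sin_pi_div_two,
      ← Complex.exp_add] <;>
    (try (congr 1; push_cast; ring))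

lemma Dm_trace (t : ℝ) : Matrix.trace (Dm t) = 2 * Real.cos t := by
  simp only [Dm, Matrix.trace_fin_two_of]
  rw [show -((t:ℂ)*Complex.I) = ((-t:ℝ):ℂ)*Complex.I by push_cast; ring]
  rw [Complex.exp_mul_I, Complex.exp_mul_I]
  push_cast
  simp [Real.cos_neg, Real.sin_neg]
  ring

lemma SU2.mat_mul (x y : SU2) : SU2.mat (x*y) = SU2.mat x * SU2.mat y := rfl
lemma SU2.mat_inv (x : SU2) : SU2.mat x⁻¹ = star (SU2.mat x) := rfl
lemma SU2.mat_pow (x : SU2) (m : ℕ) : SU2.mat (x^m) = SU2.mat x ^ m := by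
  induction m with
  | zero => rfl
  | succ m ih => rw [pow_succ, pow_succ, SU2.mat_mul, ih]

/-- for `m, n, k ≥ 1`, the word `[aᵐ, bⁿ]ᵏ` (with `[x,y] = x⁻¹y⁻¹xy`)
admits a trace-zero witness in `SU(2)`. -/
theorem commutator_power_trace_zero (m n k : ℕ) (hm : 1 ≤ m) (hn : 1 ≤ n) (hk : 1 ≤ k) :
    ∃ A B : SU2,
      Matrix.trace (SU2.mat (evalWord A B
        (((genA ^ m)⁻¹ * (genB ^ n)⁻¹ * genA ^ m * genB ^ n) ^ k))) = 0 := by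
  have hm0 : (m:ℝ) ≠ 0 := Nat.cast_ne_zero.mpr (by omega)
  have hn0 : (n:ℝ) ≠ 0 := Nat.cast_ne_zero.mpr (by omega)
  have hk0 : (k:ℝ) ≠ 0 := Nat.cast_ne_zero.mpr (by omega)
  set φ : ℝ := Real.pi / (4 * k * m) with hφ
  set ψ : ℝ := Real.pi / (2 * n) with hψ
  refine ⟨⟨⟨Dm φ, Dm_mem φ⟩, Dm_det φ⟩, ⟨⟨Rm ψ, Rm_mem ψ⟩, Rm_det ψ⟩, ?_⟩
  set A : SU2 := ⟨⟨Dm φ, Dm_mem φ⟩, Dm_det φ⟩ with hA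
  set B : SU2 := ⟨⟨Rm ψ, Rm_mem ψ⟩, Rm_det ψ⟩ with hB
  have hevA : evalWord A B genA = A := by simp [evalWord, genA]
  have hevB : evalWord A B genB = B := by simp [evalWord, genB]
  simp only [map_pow, map_mul, map_inv, hevA, hevB]
  have hmatA : SU2.mat (A ^ m) = Dm ((m:ℝ) * φ) := by
    rw [SU2.mat_pow, show SU2.mat A = Dm φ from rfl, Dm_pow]
  have hmatB : SU2.mat (B ^ n) = Rm (Real.pi / 2) := by
    have hnψ : (n:ℝ) * ψ = Real.pi / 2 := by
      rw [hψ]; field_simp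
    rw [SU2.mat_pow, show SU2.mat B = Rm ψ from rfl, Rm_pow, hnψ]
  rw [SU2.mat_pow, SU2.mat_mul, SU2.mat_mul, SU2.mat_mul, SU2.mat_inv, SU2.mat_inv,
    hmatA, hmatB]
  have : star (Dm ((m:ℝ) * φ)) * star (Rm (Real.pi / 2)) * Dm ((m:ℝ) * φ) *
      Rm (Real.pi / 2) = Dm (-(2 * ((m:ℝ) * φ))) := by
    rw [mul_assoc (star (Dm ((m:ℝ) * φ)) * star (Rm (Real.pi / 2)))]
    exact key_comm _
  rw [this, Dm_pow, Dm_trace]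
  have harg : (k:ℝ) * -(2 * ((m:ℝ) * φ)) = -(Real.pi / 2) := by
    rw [hφ]; field_simp; ring
  rw [harg]
  simp [Real.cos_neg, Real.cos_pi_div_two]
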